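/- Starting from a state on the curve σ_R(l̃, θ̃) = l̃ + 1 − cos θ̃ = 0 with θ̃ ∈ (0, π), the clockwise turning dynamics l̃' = sin θ̃, θ̃' = −1 keep the state on this curve and reach the origin (l̃, θ̃) = (0, 0) in finite time θ̃(0). -/

import Mathlib

open Real

/-
The angle has constant derivative −1, so θ̃(t) = θ₀ − t. Along the flow, cos θ̃ − 1 has derivative
−sin θ̃ · (−1) = sin θ̃ = l̃', so l̃ and cos θ̃ − 1 have the same derivative and agree at t = 0,
hence everywhere. At t = θ₀ the angle vanishes and so does l̃ = cos 0 − 1.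
-/

theorem eq_of_hasDerivAt_eq {𝕜 G : Type*} [RCLike 𝕜] [NormedAddCommGroup G] [NormedSpace 𝕜 G]
    {f g f' : 𝕜 → G} (hf : ∀ x, HasDerivAt f (f' x) x) (hg : ∀ x, HasDerivAt g (f' x) x)
    (x : 𝕜) (hfgx : f x = g x) : f = g :=
  eq_of_fderiv_eq (fun y => (hf y).differentiableAt) (fun y => (hg y).differentiableAt)
    (fun y => by rw [(hf y).hasFDerivAt.fderiv, (hg y).hasFDerivAt.fderiv]) x hfgx

theorem hasDerivAt_cos_comp_sub_one {θ : ℝ → ℝ} {t : ℝ} (hθ : HasDerivAt θ (-1) t) :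
    HasDerivAt (fun s => cos (θ s) - 1) (sin (θ t)) t :=
  (((hasDerivAt_cos (θ t)).comp t hθ).sub_const 1).congr_deriv (by ring)

theorem reach_origin_on_sigmaR_general (l θ : ℝ → ℝ) (θ0 : ℝ)
    (hinit_θ : θ 0 = θ0) (hinit_l : l 0 = Real.cos θ0 - 1)
    (hl : ∀ t, HasDerivAt l (Real.sin (θ t)) t)
    (hθ : ∀ t, HasDerivAt θ (-1) t) :
    (∀ t, l t + 1 - Real.cos (θ t) = 0) ∧ l θ0 = 0 ∧ θ θ0 = 0 := by
  have hθ_eq : θ = fun t => θ0 - t :=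
    eq_of_hasDerivAt_eq hθ (fun t => (hasDerivAt_id t).const_sub θ0) 0 (by simp [hinit_θ])
  have hl_eq : l = fun t => cos (θ t) - 1 :=
    eq_of_hasDerivAt_eq hl (fun t => hasDerivAt_cos_comp_sub_one (hθ t)) 0
      (by simp [hinit_l, hinit_θ])
  have hθ_θ0 : θ θ0 = 0 := by simp [hθ_eq]
  refine ⟨fun t => by simp [hl_eq], ?_, hθ_θ0⟩
  simp [hl_eq, hθ_θ0]

/-- Starting on σ_R = 0 with θ̃(0) = θ₀ ∈ (0,π), the clockwise turn dynamics
keep the state on the curve l̃ = cos θ̃ - 1 and reach the origin at time θ₀. -/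
theorem reach_origin_on_sigmaR (l θ : ℝ → ℝ) (θ0 : ℝ)
    (hθ0 : θ0 ∈ Set.Ioo 0 Real.pi)
    (hinit_θ : θ 0 = θ0) (hinit_l : l 0 = Real.cos θ0 - 1)
    (hl : ∀ t, HasDerivAt l (Real.sin (θ t)) t)
    (hθ : ∀ t, HasDerivAt θ (-1) t) :
    (∀ t, l t + 1 - Real.cos (θ t) = 0) ∧ l θ0 = 0 ∧ θ θ0 = 0 :=
  reach_origin_on_sigmaR_general l θ θ0 hinit_θ hinit_l hl hθ
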